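/- arXiv:2208.14090 — 2 statements merged into one kernel-verified Lean document; each statement's English description precedes it below -/
import Mathlib

section
/- Let 2 ≤ g₁ < g₂ < … < g_e be coprime positive integers forming a minimal generating system of the numerical semigroup S = ⟨g₁,…,g_e⟩ = {a₁g₁ + … + a_e g_e : a₁,…,a_e ∈ ℕ}. Let F = max(ℤ ∖ S) be the Frobenius number of S and let n = |S ∩ [0, F]| be the number of elements of S less than F. Then g₁ ≤ (e − 1)·n + 1. -/
lemma ncard_prod_aux {α β : Type*} (s : Set α) (t : Set β) :
    (s ×ˢ t).ncard = s.ncard * t.ncard := by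
  rw [← Nat.card_coe_set_eq, ← Nat.card_coe_set_eq, ← Nat.card_coe_set_eq,
    Nat.card_congr (Equiv.Set.prod s t), Nat.card_prod]

/-- **Bound on the multiplicity.**
Let `2 ≤ g₁ < g₂ < … < g_e` be coprime positive integers forming a minimal generating
system of the numerical semigroup `S = ⟨g₁,…,g_e⟩` (the set of all ℕ-linear combinations
of the `gᵢ`).  Let `F = max (ℤ \ S)` be the Frobenius number and `n = |S ∩ [0, F]|`.
Then `g₁ ≤ (e − 1)·n + 1`. -/
theorem multiplicity_bound
    (e : ℕ) (he : 2 ≤ e) (g : Fin e → ℤ)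
    (hg2 : 2 ≤ g ⟨0, by omega⟩)
    (hmono : StrictMono g)
    (hcop : Finset.univ.gcd g = 1)
    (S : Set ℤ)
    (hS : S = {x : ℤ | ∃ a : Fin e → ℕ, x = ∑ i, (a i : ℤ) * g i})
    (hmingen : ∀ i : Fin e, ¬∃ a : Fin e → ℕ, a i = 0 ∧ g i = ∑ j, (a j : ℤ) * g j)
    (F : ℤ) (hF : F ∉ S) (hFmax : ∀ x : ℤ, x ∉ S → x ≤ F)
    (n : ℕ) (hn : n = (S ∩ Set.Icc 0 F).ncard) :
    g ⟨0, by omega⟩ ≤ ((e : ℤ) - 1) * n + 1 := by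
  classical
  set z : Fin e := ⟨0, by omega⟩ with hz
  set m : ℤ := g z with hmdef
  have hm2 : (2:ℤ) ≤ m := hg2
  -- all generators are positive
  have hgpos : ∀ i, 0 < g i := by
    intro i
    have h1 : m ≤ g i := hmono.monotone (show z ≤ i by
      rw [Fin.le_def]; exact Nat.zero_le _)
    omega
  -- elements of S are nonnegative
  have hSnonneg : ∀ x ∈ S, (0:ℤ) ≤ x := by
    intro x hx
    rw [hS] at hx
    obtain ⟨a, rfl⟩ := hx
    exact Finset.sum_nonneg fun i _ => mul_nonneg (by positivity) (hgpos i).le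
  -- subtracting a used generator stays in S
  have hsub : ∀ (a : Fin e → ℕ) (i : Fin e), 1 ≤ a i →
      (∑ j, (a j : ℤ) * g j) - g i ∈ S := by
    intro a i hai
    rw [hS]
    refine ⟨Function.update a i (a i - 1), ?_⟩
    have h1 : ∀ j : Fin e, ((Function.update a i (a i - 1) j : ℕ) : ℤ) * g j
        = (a j : ℤ) * g j - (if j = i then g i else 0) := by
      intro j
      by_cases hj : j = i
      · subst hj
        rw [Function.update_self]
        have h2 : ((a j - 1 : ℕ) : ℤ) = (a j : ℤ) - 1 := by omega
        rw [h2]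
        simp; ring
      · rw [Function.update_of_ne hj]
        simp [hj]
    rw [Finset.sum_congr rfl (fun j _ => h1 j), Finset.sum_sub_distrib]
    simp
  -- key step: decompose an Apéry-type element
  have hstep : ∀ w : ℤ, w ∈ S → w - m ∉ S → w ≠ 0 →
      ∃ s : ℤ, ∃ i : Fin e, (s ∈ S ∧ s ∈ Set.Icc 0 F) ∧ i ≠ z ∧ w = s + g i := by
    intro w hw hwm hw0
    have hw' := hw
    rw [hS] at hw'
    obtain ⟨a, ha⟩ := hw'
    have haz : a z = 0 := by
      by_contra hc
      apply hwm
      have := hsub a z (by omega)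
      rw [← ha] at this
      exact this
    have hiz : ∃ i, i ≠ z ∧ 1 ≤ a i := by
      by_contra hc
      push_neg at hc
      apply hw0
      rw [ha]
      apply Finset.sum_eq_zero
      intro j _
      by_cases hj : j = z
      · rw [hj, haz]; simp
      · have h3 := hc j hj
        have : a j = 0 := by omega
        rw [this]; simp
    obtain ⟨i, hi, hai⟩ := hiz
    have hsS : w - g i ∈ S := by
      have := hsub a i hai
      rw [← ha] at this
      exact this
    have hvi : i.1 ≠ 0 := by
      intro h
      exact hi (Fin.ext h)
    have hzi : z < i := by
      rw [Fin.lt_def]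
      exact Nat.pos_of_ne_zero hvi
    have hmlt : m < g i := hmono hzi
    have hwF : w - m ≤ F := hFmax _ hwm
    refine ⟨w - g i, i, ⟨hsS, ⟨hSnonneg _ hsS, by omega⟩⟩, hi, by ring⟩
  -- for each residue class r ∈ [1, m), produce a pair
  have hleast : ∀ r : ℤ, r ∈ Set.Ico (1:ℤ) m →
      ∃ p : ℤ × Fin e, (p.1 ∈ S ∧ p.1 ∈ Set.Icc 0 F) ∧ p.2 ≠ z ∧ (p.1 + g p.2) % m = r := by
    intro r hr
    obtain ⟨hr1, hrm⟩ := hr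
    have hmpos : (0:ℤ) < m := by omega
    have hrr : r % m = r := Int.emod_eq_of_lt (by omega) hrm
    have hex : ∃ x : ℤ, x ∈ S ∧ x % m = r := by
      refine ⟨F + 1 + (r - (F+1)) % m, ?_, ?_⟩
      · by_contra hc
        have h4 := hFmax _ hc
        have h5 := Int.emod_nonneg (r - (F+1)) (by omega : m ≠ 0)
        omega
      · have h1 : F + 1 + (r - (F+1)) % m = r + m * (-((r - (F+1))/m)) := by
          rw [Int.emod_def]; ring
        rw [h1, Int.add_mul_emod_self_left, hrr]
    obtain ⟨w, ⟨hwS, hwr⟩, hwmin⟩ := Int.exists_least_of_bdd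
      (P := fun x => x ∈ S ∧ x % m = r) ⟨0, fun x hx => hSnonneg x hx.1⟩ hex
    have hwm : w - m ∉ S := by
      intro hc
      have h6 : (w - m) % m = r := by
        have h7 : w - m = w + m * (-1) := by ring
        rw [h7, Int.add_mul_emod_self_left, hwr]
      have := hwmin (w - m) ⟨hc, h6⟩
      omega
    have hw0 : w ≠ 0 := by
      intro h
      rw [h, Int.zero_emod] at hwr
      omega
    obtain ⟨s, i, hsi, hiz, hwsi⟩ := hstep w hwS hwm hw0
    exact ⟨(s, i), hsi, hiz, by rw [← hwsi]; exact hwr⟩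
  -- the target set and its cardinality
  have hNfin : (S ∩ Set.Icc 0 F).Finite :=
    (Set.finite_Icc 0 F).subset Set.inter_subset_right
  set T : Set (ℤ × Fin e) := (S ∩ Set.Icc 0 F) ×ˢ {i : Fin e | i ≠ z} with hT
  have hTfin : T.Finite := hNfin.prod (Set.toFinite _)
  have : Nonempty (ℤ × Fin e) := ⟨(0, z)⟩
  choose! f hf using hleast
  have hmaps : ∀ r ∈ Set.Ico (1:ℤ) m, f r ∈ T := by
    intro r hr
    obtain ⟨⟨h1, h2⟩, h3, _⟩ := hf r hr
    exact ⟨⟨h1, h2⟩, h3⟩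
  have hinj : Set.InjOn f (Set.Ico 1 m) := by
    intro r hr r' hr' heq
    have e1 := (hf r hr).2.2
    have e2 := (hf r' hr').2.2
    rw [← e1, ← e2, heq]
  have hcard := Set.ncard_le_ncard_of_injOn f hmaps hinj hTfin
  have hIco : (Set.Ico (1:ℤ) m).ncard = (m - 1).toNat := by
    rw [← Finset.coe_Ico, Set.ncard_coe_finset, Int.card_Ico]
  have hcompl : ({i : Fin e | i ≠ z}).ncard = e - 1 := by
    have h8 : {i : Fin e | i ≠ z} = (↑(Finset.univ.erase z) : Set (Fin e)) := by
      ext i; simp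
    rw [h8, Set.ncard_coe_finset, Finset.card_erase_of_mem (Finset.mem_univ z),
      Finset.card_univ, Fintype.card_fin]
  have hTcard : T.ncard = n * (e - 1) := by
    rw [hT, ncard_prod_aux, ← hn, hcompl]
  rw [hIco, hTcard] at hcard
  have h9 : (m - 1 : ℤ) ≤ ((n * (e - 1) : ℕ) : ℤ) := by
    rw [← Int.toNat_le] at *
    omega
  have h10 : ((n * (e - 1) : ℕ) : ℤ) = (n : ℤ) * ((e : ℤ) - 1) := by
    push_cast [Nat.cast_sub (by omega : 1 ≤ e)]
    ring
  show m ≤ ((e : ℤ) - 1) * n + 1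
  rw [h10] at h9
  linarith
end

section
/- Let S be a numerical semigroup that is almost-symmetric, with Frobenius number F, n = |S ∩ [0, F]| small elements, and type t = |PF(S)|. Then 2n + t = F + 2. -/
/-- Let `S` be an almost-symmetric numerical semigroup (a submonoid of `(ℕ,+)`, viewed
inside `ℤ`, with finite complement in `ℕ`, such that for every `x ∉ S` either
`F − x ∈ S` or both `x` and `F − x` are pseudo-Frobenius numbers), with Frobenius
number `F = max (ℤ \ S)`, `n = |S ∩ [0, F]|` small elements and type `t = |PF(S)|`.
Then `2n + t = F + 2`. -/
theorem almost_symmetric_count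
    (S : Set ℤ)
    (hzero : (0 : ℤ) ∈ S)
    (hadd : ∀ a ∈ S, ∀ b ∈ S, a + b ∈ S)
    (hnonneg : ∀ x ∈ S, 0 ≤ x)
    (hfin : {x : ℤ | 0 ≤ x ∧ x ∉ S}.Finite)
    (F : ℤ) (hF : F ∉ S) (hFmax : ∀ x : ℤ, x ∉ S → x ≤ F)
    (n : ℕ) (hn : n = (S ∩ Set.Icc 0 F).ncard)
    (PF : Set ℤ) (hPF : PF = {x : ℤ | x ∉ S ∧ ∀ s ∈ S, s ≠ 0 → x + s ∈ S})
    (t : ℕ) (ht : t = PF.ncard)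
    (hAS : ∀ x : ℤ, x ∉ S → F - x ∈ S ∨ (x ∈ PF ∧ F - x ∈ PF)) :
    2 * (n : ℤ) + (t : ℤ) = F + 2 := by
  have hFge : (-1 : ℤ) ≤ F := hFmax _ (fun h => by have := hnonneg _ h; omega)
  have hgt : ∀ x : ℤ, F < x → x ∈ S := by
    intro x hx
    by_contra h
    exact absurd (hFmax x h) (not_le.mpr hx)
  set I := Set.Icc (0 : ℤ) F with hI
  have hIfin : I.Finite := Set.finite_Icc 0 F
  set A := {x : ℤ | x ∈ I ∧ x ∉ S ∧ F - x ∈ S} with hA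
  set B := {x : ℤ | x ∈ I ∧ x ∉ S ∧ F - x ∉ S} with hB
  have hAsub : A ⊆ I := fun x hx => hx.1
  have hBsub : B ⊆ I := fun x hx => hx.1
  have hAfin : A.Finite := hIfin.subset hAsub
  have hBfin : B.Finite := hIfin.subset hBsub
  -- F is a pseudo-Frobenius number
  have hFPF : F ∈ PF := by
    rw [hPF]
    refine ⟨hF, fun s hs hs0 => ?_⟩
    have : 0 ≤ s := hnonneg s hs
    exact hgt _ (by omega)
  -- PF = insert F B
  have hPFeq : PF = insert F B := by
    ext x
    constructor
    · intro hx
      rcases eq_or_ne x F with rfl | hxF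
      · exact Set.mem_insert _ _
      · rw [hPF] at hx
        obtain ⟨hxS, hxadd⟩ := hx
        right
        have hxle : x ≤ F := hFmax x hxS
        have hFx : F - x ∉ S := by
          intro hmem
          have h0 : F - x ≠ 0 := by omega
          have := hxadd _ hmem h0
          simp at this
          exact hF this
        have hx0 : 0 ≤ x := by
          by_contra hneg
          push_neg at hneg
          have hmem : F - x ∈ S := hgt _ (by omega)
          have h0 : F - x ≠ 0 := by omega
          have := hxadd _ hmem h0
          simp at this
          exact hF this
        exact ⟨Set.mem_Icc.mpr ⟨hx0, hxle⟩, hxS, hFx⟩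
    · intro hx
      rcases hx with rfl | hx
      · exact hFPF
      · rcases hAS x hx.2.1 with h | h
        · exact absurd h hx.2.2
        · exact h.1
  have hFnotB : F ∉ B := by
    intro h
    have : F - F ∉ S := h.2.2
    simp at this
    exact this hzero
  -- t = B.ncard + 1
  have htB : t = B.ncard + 1 := by
    rw [ht, hPFeq, Set.ncard_insert_of_notMem hFnotB hBfin]
  -- A ≃ S ∩ I via x ↦ F - x
  have himg : (fun x => F - x) '' A = S ∩ I := by
    ext y
    constructor
    · rintro ⟨x, ⟨hxI, _, hFx⟩, rfl⟩
      show F - x ∈ S ∩ I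
      rw [Set.mem_Icc] at hxI
      exact ⟨hFx, Set.mem_Icc.mpr ⟨by omega, by omega⟩⟩
    · rintro ⟨hyS, hyI⟩
      rw [Set.mem_Icc] at hyI
      refine ⟨F - y, ⟨Set.mem_Icc.mpr ⟨by omega, by omega⟩, ?_, by simpa using hyS⟩, by show F - (F - y) = y; ring⟩
      intro hmem
      have := hadd _ hmem _ hyS
      simp at this
      exact hF this
  have hAn : A.ncard = n := by
    rw [hn, ← himg]
    exact (Set.ncard_image_of_injective A (fun a b h => by
      have : F - a = F - b := h
      omega)).symm
  -- I \ S = A ∪ B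
  have hsplit : I \ S = A ∪ B := by
    ext x
    simp only [Set.mem_diff, Set.mem_union, hA, hB, Set.mem_setOf_eq]
    tauto
  have hdisj : Disjoint A B := by
    rw [Set.disjoint_left]
    rintro x ⟨_, _, h⟩ ⟨_, _, h'⟩
    exact h' h
  have hcard1 : (I \ S).ncard = A.ncard + B.ncard := by
    rw [hsplit, Set.ncard_union_eq hdisj hAfin hBfin]
  -- I = (S ∩ I) ∪ (I \ S)
  have hIsplit : I = (S ∩ I) ∪ (I \ S) := by
    ext x
    simp only [Set.mem_union, Set.mem_inter_iff, Set.mem_diff]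
    tauto
  have hdisj2 : Disjoint (S ∩ I) (I \ S) := by
    rw [Set.disjoint_left]
    rintro x ⟨hx, _⟩ ⟨_, hx'⟩
    exact hx' hx
  have hcard2 : I.ncard = (S ∩ I).ncard + (I \ S).ncard := by
    conv_lhs => rw [hIsplit]
    exact Set.ncard_union_eq hdisj2 (hIfin.subset Set.inter_subset_right)
      (hIfin.subset Set.diff_subset)
  -- I.ncard = (F+1).toNat
  have hIcard : I.ncard = (F + 1).toNat := by
    rw [hI, ← Finset.coe_Icc, Set.ncard_coe_finset, Int.card_Icc]
    norm_num
  have hn' : n = (S ∩ I).ncard := hn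
  have h1 : ((F + 1).toNat : ℤ) = F + 1 := Int.toNat_of_nonneg (by omega)
  omega
end
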